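/- arXiv:2403.14529 — 10 statements merged into one kernel-verified Lean document; each statement's English description precedes it below -/
import Mathlib

section
/- Let K be a compact subset of the totally real plane V = {(ζ, conj ζ) : ζ ∈ ℂ} ⊂ ℂ². For every point (z₀, w₀) ∈ ℂ² \ K there exists a polynomial P(z,w) of degree at most 2 such that P(z₀,w₀) = 1 and sup_{(z,w) ∈ K} |P(z,w)| < 1. -/
open MvPolynomial ComplexConjugate
open scoped ComplexOrder

/-!
The quadric `Q(z, w) = (z - z₀)(w - z̄₀) + (z - w̄₀)(w - w₀)` vanishes at `(z₀, w₀)`, and on the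
totally real plane it restricts to `|ζ - z₀|² + |ζ - w̄₀|²`, which vanishes only if
`(ζ, ζ̄) = (z₀, w₀)`. So `Q` is real and positive on `K`, hence bounded by some `B` there, and
`P = 1 - Q / (B + 1)` takes values in `(0, 1)` on `K`.
-/

theorem IsCompact.exists_norm_one_sub_mul_lt_one {𝕜 X : Type*} [RCLike 𝕜] [TopologicalSpace X]
    {K : Set X} (hK : IsCompact K) {f : X → 𝕜} (hf : ContinuousOn f K)
    (hpos : ∀ x ∈ K, 0 < f x) :
    ∃ c : ℝ, ∀ x ∈ K, ‖1 - (c : 𝕜) * f x‖ < 1 := by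
  obtain ⟨B, hB⟩ := hK.exists_bound_of_continuousOn hf
  refine ⟨(|B| + 1)⁻¹, fun x hx => ?_⟩
  obtain ⟨r, hr, hfx⟩ := RCLike.pos_iff_exists_ofReal.mp (hpos x hx)
  have hrB : r ≤ B := by simpa [← hfx, abs_of_pos hr] using hB x hx
  have hcr : (|B| + 1)⁻¹ * r < 1 := by
    rw [inv_mul_lt_iff₀ (by positivity)]; linarith [le_abs_self B]
  rw [← hfx, ← RCLike.ofReal_mul, ← RCLike.ofReal_one, ← RCLike.ofReal_sub, RCLike.norm_ofReal,
    abs_of_pos (by linarith)]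
  linarith [mul_pos (inv_pos.mpr (by positivity : (0:ℝ) < |B| + 1)) hr]

noncomputable def conjSeparatingQuadric (a b : ℂ) : MvPolynomial (Fin 2) ℂ :=
  (X 0 - C a) * (X 1 - C (conj a)) + (X 0 - C (conj b)) * (X 1 - C b)

theorem totalDegree_conjSeparatingQuadric_le (a b : ℂ) :
    (conjSeparatingQuadric a b).totalDegree ≤ 2 := by
  have linear : ∀ (i : Fin 2) (a : ℂ), (X i - C a : MvPolynomial (Fin 2) ℂ).totalDegree ≤ 1 :=
    fun i a => (totalDegree_sub_C_le _ _).trans (totalDegree_X i).le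
  refine (totalDegree_add _ _).trans (max_le ?_ ?_) <;>
    exact (totalDegree_mul _ _).trans (add_le_add (linear _ _) (linear _ _))

@[simp]
theorem eval_conjSeparatingQuadric_self (a b : ℂ) :
    eval ![a, b] (conjSeparatingQuadric a b) = 0 := by
  simp [conjSeparatingQuadric]

theorem eval_conjSeparatingQuadric_conj (a b ζ : ℂ) :
    eval ![ζ, conj ζ] (conjSeparatingQuadric a b) =
      (Complex.normSq (ζ - a) + Complex.normSq (ζ - conj b) : ℝ) := by
  simp only [conjSeparatingQuadric, map_add, map_mul, map_sub, eval_X, eval_C,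
    Matrix.cons_val_zero, Matrix.cons_val_one, Complex.ofReal_add]
  rw [← Complex.mul_conj, ← Complex.mul_conj, map_sub, map_sub, Complex.conj_conj]

theorem eval_conjSeparatingQuadric_conj_pos {a b ζ : ℂ} (h : (ζ, conj ζ) ≠ (a, b)) :
    0 < eval ![ζ, conj ζ] (conjSeparatingQuadric a b) := by
  rw [eval_conjSeparatingQuadric_conj, Complex.zero_lt_real]
  rcases eq_or_ne ζ a with rfl | hζa
  · have hζb : ζ ≠ conj b := fun hζb => h (by rw [hζb, Complex.conj_conj])
    exact add_pos_of_nonneg_of_pos (Complex.normSq_nonneg _)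
      (Complex.normSq_pos.mpr (sub_ne_zero.mpr hζb))
  · exact add_pos_of_pos_of_nonneg (Complex.normSq_pos.mpr (sub_ne_zero.mpr hζa))
      (Complex.normSq_nonneg _)

/-- For a compact subset `K` of the totally real plane `{(ζ, conj ζ)} ⊆ ℂ²`, every point
outside `K` can be separated by a polynomial of degree at most `2` taking value `1`
at the point and of modulus `< 1` on `K`. -/
theorem stmt_2 (K : Set (ℂ × ℂ)) (hK : IsCompact K)
    (hKV : K ⊆ {p : ℂ × ℂ | p.2 = (starRingEnd ℂ) p.1})
    (z₀ w₀ : ℂ) (hz : (z₀, w₀) ∉ K) :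
    ∃ P : MvPolynomial (Fin 2) ℂ, P.totalDegree ≤ 2 ∧
      MvPolynomial.eval ![z₀, w₀] P = 1 ∧
      ∀ p ∈ K, ‖MvPolynomial.eval ![p.1, p.2] P‖ < 1 := by
  set Q := conjSeparatingQuadric z₀ w₀
  have hQpos : ∀ p ∈ K, 0 < eval ![p.1, p.2] Q := by
    rintro ⟨ζ, ω⟩ hp
    obtain rfl : ω = conj ζ := hKV hp
    exact eval_conjSeparatingQuadric_conj_pos fun h => hz (h ▸ hp)
  obtain ⟨c, hc⟩ := hK.exists_norm_one_sub_mul_lt_one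
    ((continuous_eval Q).comp (by fun_prop : Continuous fun p : ℂ × ℂ => ![p.1, p.2])).continuousOn
    hQpos
  refine ⟨1 - C (c : ℂ) * Q, ?_, by simp [Q], fun p hp => by simpa using hc p hp⟩
  refine (totalDegree_sub _ _).trans (max_le (by simp) ((totalDegree_mul _ _).trans ?_))
  simpa using totalDegree_conjSeparatingQuadric_le z₀ w₀
end

section
/- Every compact subset of ℝ² ⊆ ℂ² is 2-polynomially convex: for every point p of ℂ² not in K there is a polynomial P of degree at most 2 with |P(p)| > sup_K |P|. -/
/-!
Write `p = x + i y` with `x, y` real, and let `P a z = a - ∑ᵢ (zᵢ - xᵢ)²`. At a real point `q`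
one has `(qᵢ - xᵢ)² = |qᵢ - pᵢ|² - yᵢ²`, so `P a q = a + |y|² - |q - p|²`, while `P a p = a + |y|²`.
Choosing `a` so that `a + |y|²` bounds `|q - p|²` on `K` makes `0 ≤ P a q < P a p` for `q ∈ K`,
the strict inequality because `q ≠ p`.
-/

open MvPolynomial

namespace Complex

theorem sq_sub_ofReal_re_of_im_eq_zero {z : ℂ} (hz : z.im = 0) (w : ℂ) :
    (z - w.re) ^ 2 = ((‖z - w‖ ^ 2 - w.im ^ 2 : ℝ) : ℂ) := by
  rw [Complex.sq_norm, normSq_apply]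
  apply Complex.ext <;> simp [sq, hz]

theorem sq_sub_ofReal_re_self (w : ℂ) : (w - w.re) ^ 2 = -((w.im ^ 2 : ℝ) : ℂ) := by
  apply Complex.ext <;> simp [sq]

end Complex

variable {σ : Type*} [Fintype σ]

noncomputable def realCenteredQuadric (p : σ → ℂ) (a : ℂ) : MvPolynomial σ ℂ :=
  C a - ∑ i, (X i - C ((p i).re : ℂ)) ^ 2

theorem totalDegree_realCenteredQuadric_le (p : σ → ℂ) (a : ℂ) :
    (realCenteredQuadric p a).totalDegree ≤ 2 := by
  refine (totalDegree_sub _ _).trans (max_le (by simp) ?_)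
  refine (totalDegree_finsetSum _ _).trans (Finset.sup_le fun i _ => ?_)
  refine (totalDegree_pow _ _).trans ?_
  have := (totalDegree_sub_C_le (X i : MvPolynomial σ ℂ) ((p i).re : ℂ)).trans
    (totalDegree_X i).le
  omega

theorem eval_realCenteredQuadric (p z : σ → ℂ) (a : ℂ) :
    eval z (realCenteredQuadric p a) = a - ∑ i, (z i - (p i).re) ^ 2 := by
  simp [realCenteredQuadric]

theorem eval_realCenteredQuadric_of_real (p : σ → ℂ) (a : ℝ) {q : σ → ℂ}
    (hq : ∀ i, (q i).im = 0) :
    eval q (realCenteredQuadric p a) =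
      ((a + ∑ i, (p i).im ^ 2 - ∑ i, ‖q i - p i‖ ^ 2 : ℝ) : ℂ) := by
  simp only [eval_realCenteredQuadric, Complex.sq_sub_ofReal_re_of_im_eq_zero (hq _)]
  push_cast
  rw [Finset.sum_sub_distrib]
  ring

theorem eval_realCenteredQuadric_self (p : σ → ℂ) (a : ℝ) :
    eval p (realCenteredQuadric p a) = ((a + ∑ i, (p i).im ^ 2 : ℝ) : ℂ) := by
  simp only [eval_realCenteredQuadric, Complex.sq_sub_ofReal_re_self]
  push_cast
  rw [Finset.sum_neg_distrib]
  ring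

theorem exists_totalDegree_le_two_separating_of_forall_im_eq_zero {K : Set (σ → ℂ)}
    (hK : IsCompact K) (hKR : ∀ q ∈ K, ∀ i, (q i).im = 0) {p : σ → ℂ} (hp : p ∉ K) :
    ∃ P : MvPolynomial σ ℂ, P.totalDegree ≤ 2 ∧ ∀ q ∈ K, ‖eval q P‖ < ‖eval p P‖ := by
  set D : (σ → ℂ) → ℝ := fun q => ∑ i, ‖q i - p i‖ ^ 2
  obtain ⟨b, hb⟩ : BddAbove (D '' K) := hK.bddAbove_image (by fun_prop)
  set s := ∑ i, (p i).im ^ 2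
  refine ⟨realCenteredQuadric p ((b - s : ℝ) : ℂ), totalDegree_realCenteredQuadric_le _ _,
    fun q hq => ?_⟩
  have hDq : D q ≤ b := hb ⟨q, hq, rfl⟩
  have hDq_pos : 0 < D q := by
    obtain ⟨i, hi⟩ := Function.ne_iff.mp (ne_of_mem_of_not_mem hq hp)
    exact Finset.sum_pos' (fun j _ => by positivity)
      ⟨i, Finset.mem_univ _, pow_pos (norm_pos_iff.mpr (sub_ne_zero.mpr hi)) 2⟩
  rw [eval_realCenteredQuadric_of_real _ _ (hKR q hq), eval_realCenteredQuadric_self,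
    Complex.norm_real, Complex.norm_real, sub_add_cancel,
    Real.norm_of_nonneg (by linarith), Real.norm_of_nonneg (by linarith)]
  linarith

/-- Every compact subset of `ℝ² ⊆ ℂ²` is `2`-polynomially convex: every point of `ℂ²`
outside `K` can be separated from `K` by a polynomial of degree at most `2`. -/
theorem stmt_3 (K : Set (ℂ × ℂ)) (hK : IsCompact K)
    (hKR : K ⊆ {p : ℂ × ℂ | p.1.im = 0 ∧ p.2.im = 0})
    (p : ℂ × ℂ) (hp : p ∉ K) :
    ∃ P : MvPolynomial (Fin 2) ℂ, P.totalDegree ≤ 2 ∧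
      ∀ q ∈ K, ‖MvPolynomial.eval ![q.1, q.2] P‖ < ‖MvPolynomial.eval ![p.1, p.2] P‖ := by
  set e : ℂ × ℂ → (Fin 2 → ℂ) := fun q => ![q.1, q.2]
  have he : Function.Injective e := fun q q' h =>
    Prod.ext (by simpa [e] using congrFun h 0) (by simpa [e] using congrFun h 1)
  have hKR' : ∀ q ∈ e '' K, ∀ i, (q i).im = 0 := by
    rintro _ ⟨q, hq, rfl⟩ i
    fin_cases i
    exacts [(hKR hq).1, (hKR hq).2]
  obtain ⟨P, hdeg, hP⟩ := exists_totalDegree_le_two_separating_of_forall_im_eq_zero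
    (hK.image (by fun_prop)) hKR' (he.mem_set_image.not.mpr hp)
  exact ⟨P, hdeg, fun q hq => hP _ (Set.mem_image_of_mem e hq)⟩
end

section
/- Let p, q be coprime positive integers and K = {(e^{ipθ}, e^{-iqθ}) : 0 ≤ θ ≤ 2π} ⊂ ℂ² be the (p,−q)-torus knot. Then every polynomial P(z,w) with P(0,0) = 1 and sup_K |P| < 1 must have degree at least p + q. -/
/-!
For `|ζ| = 1` we have `conj ζ = ζ⁻¹`, so on the knot `P(ζ^p, conj ζ^q)` is the Laurent
polynomial `∑ₘ cₘ ζ^(p m₀ - q m₁)`. If `deg P < p + q`, coprimality of `p` and `q` rules out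
`p m₀ = q m₁` for every nonconstant monomial `m`, so this Laurent polynomial has constant term
`P(0,0) = 1`, and all its exponents have absolute value at most `(p + q) deg P`. Averaging it over
the `N`-th roots of unity for any `N > (p + q) deg P` therefore gives exactly `1`, which is
impossible when `|P| < 1` on the knot.
-/

open MvPolynomial Finset

theorem Nat.Coprime.eq_zero_of_mul_eq_mul_of_add_lt {p q a b : ℕ} (hpq : p.Coprime q)
    (h : p * a = q * b) (hlt : a + b < p + q) : a = 0 ∧ b = 0 := by
  obtain ⟨k, rfl⟩ : q ∣ a := hpq.symm.dvd_of_dvd_mul_left ⟨b, h⟩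
  obtain ⟨l, rfl⟩ : p ∣ b := hpq.dvd_of_dvd_mul_left ⟨q * k, by rw [h, mul_comm]⟩
  rcases Nat.eq_zero_or_pos (p * q) with hpq0 | hpq0
  · rcases hpq.eq_of_mul_eq_zero hpq0 with ⟨rfl, rfl⟩ | ⟨rfl, rfl⟩ <;> omega
  · obtain rfl : k = l := Nat.eq_of_mul_eq_mul_left hpq0 (by linarith)
    obtain rfl : k = 0 :=
      Nat.lt_one_iff.mp <| Nat.lt_of_mul_lt_mul_left (a := p + q) (by linarith)
    simp

theorem IsPrimitiveRoot.sum_pow_zpow {K : Type*} [Field K] {ζ : K} {N : ℕ}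
    (hζ : IsPrimitiveRoot ζ N) (k : ℤ) :
    ∑ j ∈ range N, (ζ ^ j) ^ k = if (N : ℤ) ∣ k then (N : K) else 0 := by
  have hcomm (j : ℕ) : (ζ ^ j) ^ k = (ζ ^ k) ^ j := by
    rw [← zpow_natCast, ← zpow_natCast, ← zpow_mul, ← zpow_mul, mul_comm]
  simp only [hcomm]
  split_ifs with hk
  · simp [(hζ.zpow_eq_one_iff_dvd k).mpr hk]
  · rw [geom_sum_eq (mt (hζ.zpow_eq_one_iff_dvd k).mp hk), ← zpow_natCast, ← zpow_mul,
      mul_comm, zpow_mul, hζ.zpow_eq_one, one_zpow, sub_self, zero_div]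

theorem MvPolynomial.apply_zero_add_apply_one_le_totalDegree {R : Type*} [CommSemiring R]
    {P : MvPolynomial (Fin 2) R} {m : Fin 2 →₀ ℕ} (hm : m ∈ P.support) :
    m 0 + m 1 ≤ P.totalDegree := by
  simpa [Finsupp.sum_fintype, Fin.sum_univ_two] using le_totalDegree hm

/-- The exponent of `ζ` in the monomial `z^m₀ w^m₁` evaluated at `(ζ^p, ζ^(-q))`. -/
def torusKnotExponent (p q : ℕ) (m : Fin 2 →₀ ℕ) : ℤ := p * m 0 - q * m 1

theorem torusKnotExponent_ne_zero {p q : ℕ} (hpq : p.Coprime q) {m : Fin 2 →₀ ℕ} (hm : m ≠ 0)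
    (hdeg : m 0 + m 1 < p + q) : torusKnotExponent p q m ≠ 0 := by
  intro h
  have h' : p * m 0 = q * m 1 := by
    unfold torusKnotExponent at h
    exact_mod_cast sub_eq_zero.mp h
  obtain ⟨h0, h1⟩ := hpq.eq_zero_of_mul_eq_mul_of_add_lt h' hdeg
  exact hm (by ext i; fin_cases i <;> assumption)

theorem abs_torusKnotExponent_le (p q : ℕ) (m : Fin 2 →₀ ℕ) :
    |torusKnotExponent p q m| ≤ (p + q) * (m 0 + m 1) := by
  unfold torusKnotExponent
  rw [abs_sub_le_iff]
  constructor <;> nlinarith [Nat.zero_le (p * m 0), Nat.zero_le (q * m 1)]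

theorem natCast_dvd_torusKnotExponent_iff {p q N : ℕ} (hpq : p.Coprime q) {m : Fin 2 →₀ ℕ}
    (hdeg : m 0 + m 1 < p + q) (hN : (p + q) * (m 0 + m 1) < N) :
    (N : ℤ) ∣ torusKnotExponent p q m ↔ m = 0 := by
  refine ⟨fun h => ?_, fun h => by simp [h, torusKnotExponent]⟩
  by_contra hm
  have hpos := abs_pos.mpr (torusKnotExponent_ne_zero hpq hm hdeg)
  have hle := abs_torusKnotExponent_le p q m
  have hge := Int.le_of_dvd hpos ((dvd_abs _ _).mpr h)
  linarith

theorem eval_torusKnot_eq_sum_zpow {p q : ℕ} (P : MvPolynomial (Fin 2) ℂ) {z : ℂ}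
    (hz : ‖z‖ = 1) :
    eval ![z ^ p, (starRingEnd ℂ) z ^ q] P =
      ∑ m ∈ P.support, coeff m P * z ^ torusKnotExponent p q m := by
  have hz0 : z ≠ 0 := norm_ne_zero_iff.mp (by rw [hz]; exact one_ne_zero)
  rw [eval_eq', ← Complex.inv_eq_conj hz]
  refine sum_congr rfl fun m _ => ?_
  simp only [Fin.prod_univ_two, Matrix.cons_val_zero, Matrix.cons_val_one, torusKnotExponent,
    zpow_sub₀ hz0, zpow_mul, zpow_natCast, inv_pow, ← pow_mul, div_eq_mul_inv]

theorem sum_eval_torusKnot_rootsOfUnity {p q N : ℕ} (hpq : p.Coprime q)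
    {P : MvPolynomial (Fin 2) ℂ} (hdeg : P.totalDegree < p + q)
    (hN : (p + q) * P.totalDegree < N) {ζ : ℂ} (hζ : IsPrimitiveRoot ζ N) :
    ∑ j ∈ range N, eval ![(ζ ^ j) ^ p, (starRingEnd ℂ) (ζ ^ j) ^ q] P =
      N * constantCoeff P := by
  have hζj (j : ℕ) : ‖ζ ^ j‖ = 1 := by rw [norm_pow, hζ.norm'_eq_one (by omega), one_pow]
  have hdvd {m : Fin 2 →₀ ℕ} (hm : m ∈ P.support) :
      (N : ℤ) ∣ torusKnotExponent p q m ↔ m = 0 :=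
    have hm' := apply_zero_add_apply_one_le_totalDegree hm
    natCast_dvd_torusKnotExponent_iff hpq (hm'.trans_lt hdeg)
      ((Nat.mul_le_mul_left _ hm').trans_lt hN)
  calc ∑ j ∈ range N, eval ![(ζ ^ j) ^ p, (starRingEnd ℂ) (ζ ^ j) ^ q] P
      = ∑ m ∈ P.support, coeff m P * ∑ j ∈ range N, (ζ ^ j) ^ torusKnotExponent p q m := by
        simp only [eval_torusKnot_eq_sum_zpow P (hζj _), mul_sum]
        exact sum_comm
    _ = ∑ m ∈ P.support, if m = 0 then coeff m P * N else 0 := by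
        refine sum_congr rfl fun m hm => ?_
        simp only [hζ.sum_pow_zpow, hdvd hm, mul_ite, mul_zero]
    _ = N * constantCoeff P := by
        rw [sum_ite_eq', constantCoeff_eq]
        split_ifs with h
        · ring
        · simp [notMem_support_iff.mp h]

theorem stmt_4_general (p q : ℕ) (hpq : Nat.Coprime p q)
    (P : MvPolynomial (Fin 2) ℂ)
    (h0 : MvPolynomial.eval ![(0 : ℂ), 0] P = 1)
    (hK : ∀ ζ : ℂ, ‖ζ‖ = 1 → ‖MvPolynomial.eval ![ζ ^ p, ((starRingEnd ℂ) ζ) ^ q] P‖ < 1) :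
    p + q ≤ P.totalDegree := by
  by_contra! hdeg
  obtain ⟨N, hN⟩ : ∃ N, (p + q) * P.totalDegree < N := ⟨_, lt_add_one _⟩
  have hN0 : N ≠ 0 := by omega
  obtain ⟨ζ, hζ⟩ : ∃ ζ : ℂ, IsPrimitiveRoot ζ N := ⟨_, Complex.isPrimitiveRoot_exp N hN0⟩
  have hc : constantCoeff P = 1 := by
    rw [← eval_zero, ← h0]; congr; ext i; fin_cases i <;> rfl
  have hlt : ‖∑ j ∈ range N, eval ![(ζ ^ j) ^ p, (starRingEnd ℂ) (ζ ^ j) ^ q] P‖ < N :=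
    calc _ ≤ ∑ j ∈ range N, ‖eval ![(ζ ^ j) ^ p, (starRingEnd ℂ) (ζ ^ j) ^ q] P‖ :=
          norm_sum_le _ _
      _ < ∑ j ∈ range N, 1 := sum_lt_sum_of_nonempty (nonempty_range_iff.mpr hN0) fun j _ =>
          hK _ (by rw [norm_pow, hζ.norm'_eq_one hN0, one_pow])
      _ = N := by simp
  rw [sum_eval_torusKnot_rootsOfUnity hpq hdeg hN hζ, hc, mul_one, Complex.norm_natCast] at hlt
  exact lt_irrefl _ hlt

/-- For coprime positive integers `p, q` and the `(p,−q)`-torus knot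
`K = {(ζ^p, (conj ζ)^q) : |ζ| = 1}`, every polynomial `P` with `P(0,0) = 1` and
`|P| < 1` on `K` must have total degree at least `p + q`. -/
theorem stmt_4 (p q : ℕ) (hp : 0 < p) (hq : 0 < q) (hpq : Nat.Coprime p q)
    (P : MvPolynomial (Fin 2) ℂ)
    (h0 : MvPolynomial.eval ![(0 : ℂ), 0] P = 1)
    (hK : ∀ ζ : ℂ, ‖ζ‖ = 1 → ‖MvPolynomial.eval ![ζ ^ p, ((starRingEnd ℂ) ζ) ^ q] P‖ < 1) :
    p + q ≤ P.totalDegree :=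
  stmt_4_general p q hpq P h0 hK
end

section
/- Let K₂ = {(e^{2iθ}, e^{-iθ}) : θ ∈ [0,2π]} ⊂ ℂ² and for λ ≥ 0 let H_λ = {(z,w) ∈ ℂ² : zw − z − w = λ}. Then (0,0) ∈ H₀ and H_λ ∩ K₂ = ∅ for all λ ∈ [0,∞). -/
/-! On the unit circle `ζ² · conj ζ = ζ`, so the quantity is `ζ - ζ² - conj ζ`. Its imaginary
part `2 Im ζ (1 - Re ζ)` vanishes only when `ζ` is real, i.e. `ζ = ±1`, and there its value is
`-ζ² = -1 < 0`. -/

open ComplexConjugate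

namespace Complex

theorem sq_mul_conj_of_norm_eq_one {ζ : ℂ} (hζ : ‖ζ‖ = 1) : ζ ^ 2 * conj ζ = ζ := by
  rw [pow_two, mul_assoc, mul_conj, normSq_eq_norm_sq, hζ]
  simp

theorem im_sub_sq_sub_conj (ζ : ℂ) : (ζ - ζ ^ 2 - conj ζ).im = 2 * ζ.im * (1 - ζ.re) := by
  simp only [sub_im, pow_two, mul_im, conj_im]
  ring

theorem re_sub_sq_sub_conj_of_im_eq_zero {ζ : ℂ} (h : ζ.im = 0) :
    (ζ - ζ ^ 2 - conj ζ).re = -ζ.re ^ 2 := by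
  simp only [sub_re, pow_two, mul_re, conj_re, h]
  ring

theorem sub_sq_sub_conj_ne_ofReal_of_nonneg {ζ : ℂ} (hζ : ‖ζ‖ = 1) {r : ℝ} (hr : 0 ≤ r) :
    ζ - ζ ^ 2 - conj ζ ≠ r := by
  intro h
  have hcircle : ζ.re ^ 2 + ζ.im ^ 2 = 1 := by
    rw [sq, sq, ← normSq_apply, normSq_eq_norm_sq, hζ, one_pow]
  have him : ζ.im * (1 - ζ.re) = 0 := by
    have := congrArg im h
    rw [im_sub_sq_sub_conj, ofReal_im] at this
    linarith
  have hreal : ζ.im = 0 := by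
    rcases mul_eq_zero.mp him with him0 | hre1
    · exact him0
    · nlinarith
  have hre := congrArg re h
  rw [re_sub_sq_sub_conj_of_im_eq_zero hreal, ofReal_re] at hre
  nlinarith

end Complex

/-- For `K₂ = {(ζ², conj ζ) : |ζ| = 1}` and `H_λ = {zw − z − w = λ}`, `λ ≥ 0`:
`(0,0) ∈ H₀` and `H_λ ∩ K₂ = ∅` for all `λ ≥ 0`. -/
theorem stmt_6 :
    ((0 : ℂ) * 0 - 0 - 0 = (0 : ℝ)) ∧
    ∀ ζ : ℂ, ‖ζ‖ = 1 → ∀ lam : ℝ, 0 ≤ lam →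
      ζ ^ 2 * (starRingEnd ℂ) ζ - ζ ^ 2 - (starRingEnd ℂ) ζ ≠ (lam : ℂ) := by
  refine ⟨by norm_num, fun ζ hζ lam hlam => ?_⟩
  rw [Complex.sq_mul_conj_of_norm_eq_one hζ]
  exact Complex.sub_sq_sub_conj_ne_ofReal_of_nonneg hζ hlam
end

section
/- Let K₃ = {(e^{3iθ}, e^{-iθ}) : θ ∈ [0,2π]} ⊂ ℂ² and for λ ≥ 0 let H_λ = {(z,w) : −2zw + z − 2w = λ}. Then (0,0) ∈ H₀ and H_λ ∩ K₃ = ∅ for all λ ≥ 0. -/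
/-!
On the unit circle `ζ³ · conj ζ = ζ²`, so with `ζ = a + bi` the value of `-2zw + z - 2w` at
`(ζ³, conj ζ)` has imaginary part `b (2a - 1)²`. It is therefore real only at `ζ = ±1` and
`ζ = e^{±iπ/3}`, where it equals `-3`, `-1` and `-1` respectively.
-/

open Complex ComplexConjugate
open scoped ComplexOrder

/-- The polynomial whose level sets are the curves `H_λ`. -/
def hyperbolaForm (z w : ℂ) : ℂ := -2 * (z * w) + z - 2 * w

section UnitCircle

variable {ζ : ℂ}

lemma re_sq_add_im_sq_of_norm_eq_one (hζ : ‖ζ‖ = 1) : ζ.re ^ 2 + ζ.im ^ 2 = 1 := by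
  have h := normSq_eq_norm_sq ζ
  rw [normSq_apply, hζ] at h
  linear_combination h

lemma pow_three_mul_conj_of_norm_eq_one (hζ : ‖ζ‖ = 1) : ζ ^ 3 * conj ζ = ζ ^ 2 := by
  have h : ζ * conj ζ = 1 := by
    rw [mul_conj, normSq_eq_norm_sq, hζ]
    norm_num
  linear_combination ζ ^ 2 * h

lemma hyperbolaForm_pow_three_conj (hζ : ‖ζ‖ = 1) :
    hyperbolaForm (ζ ^ 3) (conj ζ) = -2 * ζ ^ 2 + ζ ^ 3 - 2 * conj ζ := by
  rw [hyperbolaForm, pow_three_mul_conj_of_norm_eq_one hζ]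

lemma hyperbolaForm_pow_three_conj_im (hζ : ‖ζ‖ = 1) :
    (hyperbolaForm (ζ ^ 3) (conj ζ)).im = ζ.im * (2 * ζ.re - 1) ^ 2 := by
  rw [hyperbolaForm_pow_three_conj hζ]
  simp only [pow_succ, pow_zero, one_mul, sub_im, add_im, mul_im, mul_re, neg_re, neg_im,
    re_ofNat, im_ofNat, conj_re, conj_im]
  linear_combination (-ζ.im) * re_sq_add_im_sq_of_norm_eq_one hζ

lemma hyperbolaForm_pow_three_conj_re (hζ : ‖ζ‖ = 1) :
    (hyperbolaForm (ζ ^ 3) (conj ζ)).re =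
      ζ.re ^ 3 - 3 * ζ.re * ζ.im ^ 2 - 2 * (ζ.re ^ 2 - ζ.im ^ 2) - 2 * ζ.re := by
  rw [hyperbolaForm_pow_three_conj hζ]
  simp only [pow_succ, pow_zero, one_mul, sub_re, add_re, mul_re, mul_im, neg_re, neg_im,
    re_ofNat, im_ofNat, conj_re, conj_im]
  ring

lemma not_zero_le_hyperbolaForm_pow_three_conj (hζ : ‖ζ‖ = 1) :
    ¬ 0 ≤ hyperbolaForm (ζ ^ 3) (conj ζ) := by
  intro h
  obtain ⟨hre, him⟩ := Complex.le_def.1 h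
  rw [zero_re, hyperbolaForm_pow_three_conj_re hζ] at hre
  rw [zero_im, eq_comm, hyperbolaForm_pow_three_conj_im hζ] at him
  have hcirc := re_sq_add_im_sq_of_norm_eq_one hζ
  rcases mul_eq_zero.1 him with him | hre_half
  · -- `ζ = ±1`, where the value is `-ζ.re - 2`
    rw [him] at hre hcirc
    nlinarith
  · -- `ζ = e^{±iπ/3}`, where the value is `-1`
    have hre_eq : ζ.re = 1 / 2 := by linarith [pow_eq_zero_iff two_ne_zero |>.1 hre_half]
    rw [hre_eq] at hre hcirc
    nlinarith

end UnitCircle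

/-- For `K₃ = {(ζ³, conj ζ) : |ζ| = 1}` and `H_λ = {−2zw + z − 2w = λ}`, `λ ≥ 0`:
`(0,0) ∈ H₀` and `H_λ ∩ K₃ = ∅` for all `λ ≥ 0`. -/
theorem stmt_7 :
    (-2 * ((0 : ℂ) * 0) + 0 - 2 * 0 = (0 : ℝ)) ∧
    ∀ ζ : ℂ, ‖ζ‖ = 1 → ∀ lam : ℝ, 0 ≤ lam →
      -2 * (ζ ^ 3 * (starRingEnd ℂ) ζ) + ζ ^ 3 - 2 * (starRingEnd ℂ) ζ ≠ (lam : ℂ) := by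
  refine ⟨by norm_num, fun ζ hζ lam hlam h => not_zero_le_hyperbolaForm_pow_three_conj hζ ?_⟩
  rw [hyperbolaForm, h]
  exact zero_le_real.2 hlam
end

section
/- Let K = {z₀, z₁, …, z_n} be n+1 distinct points in ℂ and w ∉ K. Then w lies in the n-polynomial hull of K if and only if all the complex numbers (z_i − w)·∏_{j ≠ i}(z_i − z_j), i = 0,…,n, lie on the same real half-line from the origin (i.e. all are positive real multiples of a single nonzero complex number). -/
/-!
Lagrange interpolation at `w` gives `P(w) = ∑ P(zᵢ) ℓᵢ` for `deg P ≤ n`, with weights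
`ℓᵢ = Lᵢ(w)` summing to `1`, and every vector of values `P(zᵢ)` occurs. So `w` lies in the hull
iff the functional `c ↦ ∑ cᵢ ℓᵢ` has norm at most `1` for the sup norm, i.e. `∑ |ℓᵢ| ≤ 1 = ∑ ℓᵢ`,
which forces every `ℓᵢ` to be a nonnegative real. Finally
`ℓᵢ · (zᵢ - w) ∏_{j ≠ i} (zᵢ - zⱼ) = -∏ⱼ (w - zⱼ)` does not depend on `i`, so the `ℓᵢ` are
positive reals exactly when these products lie on one open ray from the origin.
-/

open Finset Polynomial
open scoped ComplexOrder

section Weights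

variable {𝕜 ι : Type*} [RCLike 𝕜] {ℓ : ι → 𝕜}

theorem nonneg_of_sum_norm_le_re_sum {s : Finset ι}
    (h : ∑ i ∈ s, ‖ℓ i‖ ≤ RCLike.re (∑ i ∈ s, ℓ i)) : ∀ i ∈ s, 0 ≤ ℓ i := by
  rw [map_sum] at h
  have hle : ∀ i ∈ s, RCLike.re (ℓ i) ≤ ‖ℓ i‖ := fun i _ => RCLike.re_le_norm (ℓ i)
  have heq := (sum_eq_sum_iff_of_le hle).1 (le_antisymm (sum_le_sum hle) h)
  intro i hi
  rw [RCLike.norm_le_re_iff_eq_norm.1 (heq i hi).ge]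
  exact RCLike.ofReal_nonneg.2 (norm_nonneg _)

variable [Fintype ι]

theorem forall_norm_sum_mul_le_sup'_iff_nonneg [Nonempty ι] (hℓ : ∑ i, ℓ i = 1) :
    (∀ c : ι → 𝕜, ‖∑ i, c i * ℓ i‖ ≤ univ.sup' univ_nonempty fun i => ‖c i‖) ↔
      ∀ i, 0 ≤ ℓ i := by
  constructor
  · intro H
    set c : ι → 𝕜 := fun i => starRingEnd 𝕜 (ℓ i) / ‖ℓ i‖
    have hc : ∀ i, c i * ℓ i = ‖ℓ i‖ := fun i => by
      rcases eq_or_ne (ℓ i) 0 with h | h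
      · simp [c, h]
      · have : (‖ℓ i‖ : 𝕜) ≠ 0 := RCLike.ofReal_ne_zero.2 (norm_ne_zero_iff.2 h)
        rw [div_mul_eq_mul_div, RCLike.conj_mul, div_eq_iff this]
        ring
    have hc_le : (univ.sup' univ_nonempty fun i => ‖c i‖) ≤ 1 :=
      sup'_le _ _ fun i _ => by
        simp only [c, norm_div, RCLike.norm_conj, RCLike.norm_ofReal, abs_norm]
        exact div_self_le_one _
    have hsum : ∑ i, ‖ℓ i‖ ≤ 1 := by
      have := (H c).trans hc_le
      simp_rw [hc, ← RCLike.ofReal_sum, RCLike.norm_ofReal] at this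
      exact (le_abs_self _).trans this
    refine fun i => nonneg_of_sum_norm_le_re_sum (s := univ) ?_ i (mem_univ i)
    rwa [hℓ, RCLike.one_re]
  · intro hℓ0 c
    have hsum : ∑ i, ‖ℓ i‖ = 1 := by
      apply RCLike.ofReal_injective (K := 𝕜)
      simp_rw [RCLike.ofReal_sum, RCLike.norm_of_nonneg' (hℓ0 _), hℓ, RCLike.ofReal_one]
    set M := univ.sup' univ_nonempty fun i => ‖c i‖
    calc ‖∑ i, c i * ℓ i‖ ≤ ∑ i, ‖c i‖ * ‖ℓ i‖ := norm_sum_le_of_le _ fun i _ => norm_mul_le _ _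
      _ ≤ ∑ i, M * ‖ℓ i‖ := sum_le_sum fun i _ =>
          mul_le_mul_of_nonneg_right (le_sup' (fun j => ‖c j‖) (mem_univ i)) (norm_nonneg _)
      _ = M := by rw [← mul_sum, hsum, mul_one]

theorem forall_nonneg_iff_exists_common_ray {a : ι → 𝕜} {q : 𝕜} (hq : q ≠ 0)
    (hℓ : ∑ i, ℓ i = 1) (hℓa : ∀ i, ℓ i * a i = q) :
    (∀ i, 0 ≤ ℓ i) ↔ ∃ u : 𝕜, ‖u‖ = 1 ∧ ∀ i, ∃ r : ℝ, 0 < r ∧ a i = r * u := by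
  have hℓ0 : ∀ i, ℓ i ≠ 0 := fun i h => hq (by rw [← hℓa i, h, zero_mul])
  constructor
  · intro hnn
    refine ⟨q / ‖q‖, by simp [norm_div, hq], fun i => ?_⟩
    obtain ⟨x, hx, hxℓ⟩ := RCLike.pos_iff_exists_ofReal.1 (lt_of_le_of_ne (hnn i) (hℓ0 i).symm)
    refine ⟨‖q‖ / x, div_pos (norm_pos_iff.2 hq) hx, ?_⟩
    have hx' : (x : 𝕜) ≠ 0 := RCLike.ofReal_ne_zero.2 hx.ne'
    have hxa : (x : 𝕜) * a i = q := hxℓ ▸ hℓa i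
    rw [RCLike.ofReal_div]
    field_simp
    linear_combination hxa
  · rintro ⟨u, hu, hau⟩
    choose r hr hra using hau
    have hu0 : u ≠ 0 := by rintro rfl; simp at hu
    have hr0 : ∀ i, (r i : 𝕜) ≠ 0 := fun i => RCLike.ofReal_ne_zero.2 (hr i).ne'
    have hℓr : ∀ i, ℓ i = ((r i)⁻¹ : ℝ) * (q / u) := fun i => by
      rw [← hℓa i, hra i, RCLike.ofReal_inv]
      field_simp
      exact (mul_div_cancel_right₀ _ (hr0 i)).symm
    have hqu : q / u = ((∑ i, (r i)⁻¹)⁻¹ : ℝ) := by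
      have h1 : ((∑ i, (r i)⁻¹ : ℝ) : 𝕜) * (q / u) = 1 := by
        rw [RCLike.ofReal_sum, sum_mul, ← hℓ]
        exact sum_congr rfl fun i _ => (hℓr i).symm
      rw [RCLike.ofReal_inv, eq_inv_of_mul_eq_one_right h1]
    intro i
    rw [hℓr i, hqu, ← RCLike.ofReal_mul, RCLike.ofReal_nonneg]
    exact mul_nonneg (inv_nonneg.2 (hr i).le)
      (inv_nonneg.2 (sum_nonneg fun j _ => (inv_pos.2 (hr j)).le))

end Weights

section Lagrange

variable {F ι : Type*} [DecidableEq ι]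

theorem eval_eq_sum_eval_mul_eval_basis [Field F] {s : Finset ι} {v : ι → F}
    (hvs : Set.InjOn v s) {P : F[X]} (hP : P.degree < #s) (x : F) :
    P.eval x = ∑ i ∈ s, P.eval (v i) * (Lagrange.basis s v i).eval x := by
  conv_lhs => rw [Lagrange.eq_interpolate hvs hP]
  simp [Lagrange.interpolate_apply, eval_finsetSum, mul_comm]

theorem eval_basis_mul_eq_neg_eval_nodal [Field F] {s : Finset ι} {v : ι → F} {i : ι}
    (hvs : Set.InjOn v s) (hi : i ∈ s) {x : F} (hx : x ≠ v i) :
    (Lagrange.basis s v i).eval x * ((v i - x) * ∏ j ∈ s.erase i, (v i - v j)) =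
      -(Lagrange.nodal s v).eval x := by
  rw [Lagrange.eval_basis_not_at_node hi hx, ← inv_inv (∏ j ∈ s.erase i, _), ← prod_inv_distrib,
    ← Lagrange.nodalWeight]
  field_simp [sub_ne_zero.2 hx, Lagrange.nodalWeight_ne_zero hvs hi]
  ring

theorem sum_eval_basis [Field F] {s : Finset ι} {v : ι → F} (hvs : Set.InjOn v s)
    (hs : s.Nonempty) (x : F) : ∑ i ∈ s, (Lagrange.basis s v i).eval x = 1 := by
  rw [← eval_finsetSum, Lagrange.sum_basis hvs hs, eval_one]

variable [NormedField F] [Fintype ι] [Nonempty ι]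

theorem forall_norm_eval_le_sup'_iff {v : ι → F} (hv : Function.Injective v) (x : F) :
    (∀ P : F[X], P.degree < Fintype.card ι →
        ‖P.eval x‖ ≤ univ.sup' univ_nonempty fun i => ‖P.eval (v i)‖) ↔
      ∀ c : ι → F, ‖∑ i, c i * (Lagrange.basis univ v i).eval x‖ ≤
        univ.sup' univ_nonempty fun i => ‖c i‖ := by
  have hvs : Set.InjOn v (univ : Finset ι) := hv.injOn
  constructor
  · intro H c
    have hnode : ∀ i, (Lagrange.interpolate univ v c).eval (v i) = c i := fun i =>
      Lagrange.eval_interpolate_at_node c hvs (mem_univ i)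
    have hx : (Lagrange.interpolate univ v c).eval x =
        ∑ i, c i * (Lagrange.basis univ v i).eval x := by
      simp [Lagrange.interpolate_apply, eval_finsetSum, mul_comm]
    simpa only [hnode, hx] using
      H (Lagrange.interpolate univ v c) (Lagrange.degree_interpolate_lt c hvs)
  · intro H P hP
    rw [eval_eq_sum_eval_mul_eval_basis hvs hP]
    exact H _

end Lagrange

/-- `w` lies in the `n`-polynomial hull of `n+1` distinct points `z₀, …, z_n` iff the
values `(z_i − w) ∏_{j ≠ i}(z_i − z_j)` all lie on the same real half-line from the
origin. -/
theorem stmt_9 (n : ℕ) (z : Fin (n + 1) → ℂ) (hinj : Function.Injective z)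
    (w : ℂ) (hw : w ∉ Set.range z) :
    (∀ P : Polynomial ℂ, P.natDegree ≤ n →
        ‖P.eval w‖ ≤ Finset.univ.sup' Finset.univ_nonempty fun i => ‖P.eval (z i)‖) ↔
    ∃ u : ℂ, ‖u‖ = 1 ∧ ∀ i : Fin (n + 1), ∃ r : ℝ, 0 < r ∧
      (z i - w) * ∏ j ∈ Finset.univ.erase i, (z i - z j) = (r : ℂ) * u := by
  have hwz : ∀ i, w ≠ z i := fun i h => hw ⟨i, h.symm⟩
  have hdeg : ∀ P : ℂ[X], P.natDegree ≤ n ↔ P.degree < Fintype.card (Fin (n + 1)) := fun P => by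
    rw [Fintype.card_fin, natDegree_le_iff_degree_le, ← mem_degreeLE, ← degreeLT_succ_eq_degreeLE,
      mem_degreeLT]
  have hnodal : -(Lagrange.nodal univ z).eval w ≠ 0 :=
    neg_ne_zero.2 (Lagrange.eval_nodal_not_at_node fun i _ => hwz i)
  simp_rw [hdeg]
  rw [forall_norm_eval_le_sup'_iff hinj w,
    forall_norm_sum_mul_le_sup'_iff_nonneg (sum_eval_basis hinj.injOn univ_nonempty w),
    forall_nonneg_iff_exists_common_ray hnodal (sum_eval_basis hinj.injOn univ_nonempty w)
      fun i => eval_basis_mul_eq_neg_eval_nodal hinj.injOn (mem_univ i) (hwz i),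
    RCLike.ofReal_eq_complex_ofReal]
end

section
/- Three distinct non-collinear points z₀, z₁, z₂ ∈ ℂ fail to be 2-polynomially convex if and only if the triangle with vertices z₀, z₁, z₂ is acute; in that case the unique extra point of the 2-polynomial hull is the orthocenter of the triangle. -/
/-!
For `w` off the nodes, Lagrange interpolation writes `P w = ∑ Lᵢ(w) P(zᵢ)` for every `P` of
degree `≤ 2`, and every triple of values is attained; so `w` lies in the hull iff the weights
`Lᵢ(w)`, which sum to `1`, are all positive reals. The identity
`L₀ (w - z₀)² = -L₁ L₂ (z₁ - z₂)²` then makes `(w - z₀)/(z₁ - z₂)` purely imaginary: `w` lies on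
every altitude, so it is the orthocenter `H`. Finally `Lᵢ(H) = dⱼ dₖ / q²`, where `dᵢ` is the
inner product at the vertex `zᵢ` and `q = ω (z₁ - z₀) (z₂ - z₀)` the area form, and these are all positive exactly
when every `dᵢ` is, i.e. when the triangle is acute.
-/

open Polynomial Complex ComplexConjugate InnerProductGeometry Module
open scoped ComplexOrder RealInnerProductSpace

attribute [local instance] Complex.finrank_real_complex_fact

theorem InnerProductGeometry.angle_lt_pi_div_two_iff_inner_pos {V : Type*}
    [NormedAddCommGroup V] [InnerProductSpace ℝ V] (x y : V) :
    angle x y < Real.pi / 2 ↔ 0 < ⟪x, y⟫ := by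
  rw [angle, Real.arccos_lt_pi_div_two]
  rcases eq_or_ne x 0 with rfl | hx
  · simp
  rcases eq_or_ne y 0 with rfl | hy
  · simp
  exact div_pos_iff_of_pos_right (by positivity)

theorem Orientation.eq_zero_of_inner_eq_zero_of_areaForm_ne_zero {E : Type*}
    [NormedAddCommGroup E] [InnerProductSpace ℝ E] [Fact (finrank ℝ E = 2)]
    (o : Orientation ℝ E (Fin 2)) {δ x y : E} (hxy : o.areaForm x y ≠ 0) (hx : ⟪δ, x⟫ = 0)
    (hy : ⟪δ, y⟫ = 0) : δ = 0 := by
  have h := o.inner_mul_areaForm_sub δ x y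
  rw [hx, hy] at h
  simpa [hxy] using h.symm

lemma Complex.collinear_of_areaForm_eq_zero {a b c : ℂ}
    (h : Complex.orientation.areaForm (b - a) (c - a) = 0) :
    Collinear ℝ ({a, b, c} : Set ℂ) := by
  rcases eq_or_ne b a with rfl | hba
  · simp [collinear_pair]
  rw [show ({a, b, c} : Set ℂ) = {c, a, b} by
    ext; simp only [Set.mem_insert_iff, Set.mem_singleton_iff]; tauto]
  apply collinear_insert_of_mem_affineSpan_pair
  have hreal : (c - a) / (b - a) = (((c - a) / (b - a)).re : ℂ) := by
    refine Complex.ext rfl ?_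
    simp only [Complex.areaForm, div_im, ofReal_im, mul_im, conj_re, conj_im] at h ⊢
    rw [← sub_div, div_eq_zero_iff]
    left
    linarith
  convert AffineMap.lineMap_mem_affineSpan_pair (k := ℝ) ((c - a) / (b - a)).re a b using 1
  rw [AffineMap.lineMap_apply, vsub_eq_sub, vadd_eq_add, real_smul, ← hreal,
    div_mul_cancel₀ _ (sub_ne_zero.2 hba)]
  ring

lemma Complex.re_eq_zero_of_sq_nonpos {s : ℂ} (h : s ^ 2 ≤ 0) : s.re = 0 := by
  rw [le_def, sq, mul_re, mul_im] at h
  simp only [zero_re, zero_im] at h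
  obtain ⟨hre, him⟩ := h
  rcases mul_eq_zero.1 (by linarith : s.re * s.im = 0) with h | h
  · exact h
  · rw [h] at hre
    nlinarith

lemma Complex.inner_eq_zero_of_sq_eq_neg_mul_sq {x y r : ℂ} (hr : 0 ≤ r)
    (h : x ^ 2 = -r * y ^ 2) : ⟪x, y⟫ = 0 := by
  rw [Complex.inner]
  apply re_eq_zero_of_sq_nonpos
  have hconj : conj r = r := IsSelfAdjoint.of_nonneg hr
  have hsq : (y * conj x) ^ 2 = -(r * ((normSq y ^ 2 : ℝ) : ℂ)) := by
    rw [mul_pow, ← map_pow, h, map_mul, map_neg, hconj, ofReal_pow, ← mul_conj, map_pow]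
    ring
  rw [hsq, neg_nonpos]
  exact mul_nonneg hr (zero_le_real.2 (by positivity))

lemma norm_mul_add_mul_add_mul_le_max_iff {L₀ L₁ L₂ : ℂ} (hL : L₀ + L₁ + L₂ = 1) :
    (∀ a b c : ℂ, ‖L₀ * a + L₁ * b + L₂ * c‖ ≤ max ‖a‖ (max ‖b‖ ‖c‖)) ↔
      0 ≤ L₀ ∧ 0 ≤ L₁ ∧ 0 ≤ L₂ := by
  have hre : L₀.re + L₁.re + L₂.re = 1 := by simpa using congrArg re hL
  constructor
  · intro h
    -- test against the unimodular values `‖Lᵢ‖ / Lᵢ`, which turn the sum into `∑ ‖Lᵢ‖`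
    have hunit : ∀ L : ℂ, L * (‖L‖ / L) = ‖L‖ ∧ ‖(‖L‖ : ℂ) / L‖ ≤ 1 := by
      intro L
      rcases eq_or_ne L 0 with rfl | hL0
      · simp
      refine ⟨mul_div_cancel₀ _ hL0, ?_⟩
      rw [norm_div, norm_real, norm_norm, div_self (norm_ne_zero_iff.2 hL0)]
    have hsum := h (‖L₀‖ / L₀) (‖L₁‖ / L₁) (‖L₂‖ / L₂)
    rw [(hunit L₀).1, (hunit L₁).1, (hunit L₂).1, ← ofReal_add, ← ofReal_add, norm_real,
      Real.norm_of_nonneg (by positivity)] at hsum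
    have hmax : max ‖(‖L₀‖ : ℂ) / L₀‖ (max ‖(‖L₁‖ : ℂ) / L₁‖ ‖(‖L₂‖ : ℂ) / L₂‖) ≤ 1 :=
      max_le (hunit L₀).2 (max_le (hunit L₁).2 (hunit L₂).2)
    have h₀ := re_le_norm L₀
    have h₁ := re_le_norm L₁
    have h₂ := re_le_norm L₂
    exact ⟨re_eq_norm.1 (by linarith), re_eq_norm.1 (by linarith), re_eq_norm.1 (by linarith)⟩
  · rintro ⟨h₀, h₁, h₂⟩ a b c
    set M := max ‖a‖ (max ‖b‖ ‖c‖)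
    have ha : ‖a‖ ≤ M := le_max_left _ _
    have hb : ‖b‖ ≤ M := (le_max_left _ _).trans (le_max_right _ _)
    have hc : ‖c‖ ≤ M := (le_max_right _ _).trans (le_max_right _ _)
    calc ‖L₀ * a + L₁ * b + L₂ * c‖ ≤ ‖L₀‖ * ‖a‖ + ‖L₁‖ * ‖b‖ + ‖L₂‖ * ‖c‖ := by
          simpa only [norm_mul] using norm_add₃_le (a := L₀ * a) (b := L₁ * b) (c := L₂ * c)
      _ ≤ ‖L₀‖ * M + ‖L₁‖ * M + ‖L₂‖ * M := by gcongr
      _ = M := by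
          rw [← re_eq_norm.2 h₀, ← re_eq_norm.2 h₁, ← re_eq_norm.2 h₂, ← add_mul, ← add_mul,
            hre, one_mul]

lemma Polynomial.eval_eq_of_natDegree_le_two {P : ℂ[X]} (hP : P.natDegree ≤ 2) (x : ℂ) :
    P.eval x = P.coeff 0 + P.coeff 1 * x + P.coeff 2 * x ^ 2 := by
  rw [eval_eq_sum_range' (by omega : P.natDegree < 3)]
  simp [Finset.sum_range_succ]

lemma Polynomial.exists_natDegree_le_two_eval_eq {z₀ z₁ z₂ : ℂ} (h01 : z₀ ≠ z₁) (h02 : z₀ ≠ z₂)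
    (h12 : z₁ ≠ z₂) (a b c : ℂ) :
    ∃ P : ℂ[X], P.natDegree ≤ 2 ∧ P.eval z₀ = a ∧ P.eval z₁ = b ∧ P.eval z₂ = c := by
  have hinj : Set.InjOn ![z₀, z₁, z₂] (Finset.univ : Finset (Fin 3)) := by
    intro i _ j _
    fin_cases i <;> fin_cases j <;> simp_all [eq_comm]
  refine ⟨Lagrange.interpolate Finset.univ ![z₀, z₁, z₂] ![a, b, c], ?_,
    Lagrange.eval_interpolate_at_node _ hinj (Finset.mem_univ 0),
    Lagrange.eval_interpolate_at_node _ hinj (Finset.mem_univ 1),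
    Lagrange.eval_interpolate_at_node _ hinj (Finset.mem_univ 2)⟩
  have hdeg := Lagrange.degree_interpolate_lt ![a, b, c] hinj
  rw [Finset.card_univ, Fintype.card_fin] at hdeg
  exact natDegree_le_iff_coeff_eq_zero.2 fun _ hN => (degree_lt_iff_coeff_zero _ 3).1 hdeg _ hN

noncomputable def lagrangeWeight (a b c w : ℂ) : ℂ := (w - b) * (w - c) / ((a - b) * (a - c))

/-- The `2`-polynomial hull `P₂({z₀, z₁, z₂})`. -/
def polyHull₂ (z₀ z₁ z₂ : ℂ) : Set ℂ :=
  {w | ∀ P : ℂ[X], P.natDegree ≤ 2 →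
    ‖P.eval w‖ ≤ max ‖P.eval z₀‖ (max ‖P.eval z₁‖ ‖P.eval z₂‖)}

/-- The altitude from `a` is `a + ℝ • I * (b - c)`; the coefficient `⟪b - a, c - a⟫ / q`, with
`q` the oriented area, puts the point on the altitude from `b`. For collinear points `q = 0`
and the value `a` is junk. -/
noncomputable def orthocenter (a b c : ℂ) : ℂ :=
  a + (⟪b - a, c - a⟫ / Complex.orientation.areaForm (b - a) (c - a) : ℝ) * I * (b - c)

section LagrangeWeight

variable {a b c z₀ z₁ z₂ w : ℂ}

lemma lagrangeWeight_comm (a b c w : ℂ) : lagrangeWeight a b c w = lagrangeWeight a c b w := by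
  simp only [lagrangeWeight, mul_comm]

lemma lagrangeWeight_ne_zero (hab : a ≠ b) (hac : a ≠ c) (hb : w ≠ b) (hc : w ≠ c) :
    lagrangeWeight a b c w ≠ 0 :=
  div_ne_zero (mul_ne_zero (sub_ne_zero.2 hb) (sub_ne_zero.2 hc))
    (mul_ne_zero (sub_ne_zero.2 hab) (sub_ne_zero.2 hac))

lemma eval_eq_lagrangeWeight (h01 : z₀ ≠ z₁) (h02 : z₀ ≠ z₂) (h12 : z₁ ≠ z₂) {P : ℂ[X]}
    (hP : P.natDegree ≤ 2) (w : ℂ) :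
    P.eval w = lagrangeWeight z₀ z₁ z₂ w * P.eval z₀ + lagrangeWeight z₁ z₀ z₂ w * P.eval z₁ +
      lagrangeWeight z₂ z₀ z₁ w * P.eval z₂ := by
  have := sub_ne_zero.2 h01
  have := sub_ne_zero.2 h02
  have := sub_ne_zero.2 h12
  have := sub_ne_zero.2 h01.symm
  have := sub_ne_zero.2 h02.symm
  have := sub_ne_zero.2 h12.symm
  simp only [eval_eq_of_natDegree_le_two hP, lagrangeWeight]
  field_simp
  ring

lemma lagrangeWeight_add (h01 : z₀ ≠ z₁) (h02 : z₀ ≠ z₂) (h12 : z₁ ≠ z₂) (w : ℂ) :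
    lagrangeWeight z₀ z₁ z₂ w + lagrangeWeight z₁ z₀ z₂ w + lagrangeWeight z₂ z₀ z₁ w = 1 := by
  simpa using (eval_eq_lagrangeWeight h01 h02 h12 (P := 1) (by simp) w).symm

lemma lagrangeWeight_mul_sq (hab : a ≠ b) (hac : a ≠ c) (hbc : b ≠ c) (w : ℂ) :
    lagrangeWeight a b c w * (w - a) ^ 2 =
      -(lagrangeWeight b a c w * lagrangeWeight c a b w) * (b - c) ^ 2 := by
  have := sub_ne_zero.2 hab
  have := sub_ne_zero.2 hac
  have := sub_ne_zero.2 hbc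
  have := sub_ne_zero.2 hab.symm
  have := sub_ne_zero.2 hac.symm
  have := sub_ne_zero.2 hbc.symm
  simp only [lagrangeWeight]
  field_simp
  ring

lemma inner_sub_eq_zero_of_lagrangeWeight_pos (hab : a ≠ b) (hac : a ≠ c) (hbc : b ≠ c)
    (h₀ : 0 < lagrangeWeight a b c w) (h₁ : 0 < lagrangeWeight b a c w)
    (h₂ : 0 < lagrangeWeight c a b w) : ⟪a - w, b - c⟫ = 0 := by
  apply inner_eq_zero_of_sq_eq_neg_mul_sq (div_nonneg (mul_nonneg h₁.le h₂.le) h₀.le)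
  have := lagrangeWeight_mul_sq hab hac hbc w
  field_simp
  linear_combination this

end LagrangeWeight

section PolyHull

variable {z₀ z₁ z₂ w : ℂ}

theorem mem_polyHull₂_iff (h01 : z₀ ≠ z₁) (h02 : z₀ ≠ z₂) (h12 : z₁ ≠ z₂) :
    w ∈ polyHull₂ z₀ z₁ z₂ ↔
      0 ≤ lagrangeWeight z₀ z₁ z₂ w ∧ 0 ≤ lagrangeWeight z₁ z₀ z₂ w ∧
        0 ≤ lagrangeWeight z₂ z₀ z₁ w := by
  rw [← norm_mul_add_mul_add_mul_le_max_iff (lagrangeWeight_add h01 h02 h12 w)]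
  constructor
  · intro h a b c
    obtain ⟨P, hP, rfl, rfl, rfl⟩ := exists_natDegree_le_two_eval_eq h01 h02 h12 a b c
    rw [← eval_eq_lagrangeWeight h01 h02 h12 hP]
    exact h P hP
  · intro h P hP
    rw [eval_eq_lagrangeWeight h01 h02 h12 hP]
    exact h _ _ _

theorem mem_polyHull₂_diff_iff (h01 : z₀ ≠ z₁) (h02 : z₀ ≠ z₂) (h12 : z₁ ≠ z₂) :
    w ∈ polyHull₂ z₀ z₁ z₂ \ {z₀, z₁, z₂} ↔
      0 < lagrangeWeight z₀ z₁ z₂ w ∧ 0 < lagrangeWeight z₁ z₀ z₂ w ∧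
        0 < lagrangeWeight z₂ z₀ z₁ w := by
  constructor
  · rintro ⟨hw, hwK⟩
    simp only [Set.mem_insert_iff, Set.mem_singleton_iff, not_or] at hwK
    obtain ⟨hw0, hw1, hw2⟩ := hwK
    obtain ⟨h₀, h₁, h₂⟩ := (mem_polyHull₂_iff h01 h02 h12).1 hw
    exact ⟨h₀.lt_of_ne (lagrangeWeight_ne_zero h01 h02 hw1 hw2).symm,
      h₁.lt_of_ne (lagrangeWeight_ne_zero h01.symm h12 hw0 hw2).symm,
      h₂.lt_of_ne (lagrangeWeight_ne_zero h02.symm h12.symm hw0 hw1).symm⟩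
  · rintro ⟨h₀, h₁, h₂⟩
    refine ⟨(mem_polyHull₂_iff h01 h02 h12).2 ⟨h₀.le, h₁.le, h₂.le⟩, ?_⟩
    rintro (rfl | rfl | rfl) <;> simp [lagrangeWeight] at h₀ h₁

theorem inner_eq_zero_of_mem_polyHull₂_diff (h01 : z₀ ≠ z₁) (h02 : z₀ ≠ z₂) (h12 : z₁ ≠ z₂)
    (hw : w ∈ polyHull₂ z₀ z₁ z₂ \ {z₀, z₁, z₂}) :
    ⟪z₀ - w, z₁ - z₂⟫ = 0 ∧ ⟪z₁ - w, z₂ - z₀⟫ = 0 := by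
  obtain ⟨h₀, h₁, h₂⟩ := (mem_polyHull₂_diff_iff h01 h02 h12).1 hw
  refine ⟨inner_sub_eq_zero_of_lagrangeWeight_pos h01 h02 h12 h₀ h₁ h₂, ?_⟩
  rw [lagrangeWeight_comm] at h₁ h₂
  exact inner_sub_eq_zero_of_lagrangeWeight_pos h12 h01.symm h02.symm h₁ h₂ h₀

end PolyHull

section Orthocenter

variable {a b c w : ℂ}

lemma inner_orthocenter (hq : Complex.orientation.areaForm (b - a) (c - a) ≠ 0) :
    ⟪a - orthocenter a b c, b - c⟫ = 0 ∧ ⟪b - orthocenter a b c, c - a⟫ = 0 := by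
  obtain ⟨u, rfl⟩ : ∃ u, b = a + u := ⟨b - a, by ring⟩
  obtain ⟨v, rfl⟩ : ∃ v, c = a + v := ⟨c - a, by ring⟩
  simp only [orthocenter, add_sub_cancel_left, add_sub_add_left_eq_sub, sub_add_cancel_left]
    at hq ⊢
  set q := Complex.orientation.areaForm u v with hq_def
  simp only [Complex.inner, mul_re, mul_im, conj_re, conj_im, sub_re, sub_im, neg_re, neg_im,
    ofReal_re, ofReal_im, I_re, I_im]
  constructor <;> field_simp <;> simp only [hq_def, Complex.areaForm, mul_im, conj_re, conj_im] <;>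
    ring

lemma eq_orthocenter (hq : Complex.orientation.areaForm (b - a) (c - a) ≠ 0)
    (h : ⟪a - w, b - c⟫ = 0 ∧ ⟪b - w, c - a⟫ = 0) : w = orthocenter a b c := by
  obtain ⟨ha, hb⟩ := inner_orthocenter hq
  rw [← sub_eq_zero]
  refine Complex.orientation.eq_zero_of_inner_eq_zero_of_areaForm_ne_zero
    (x := b - c) (y := c - a) ?_ ?_ ?_
  · convert hq using 1
    simp only [Complex.areaForm, mul_im, conj_re, conj_im, sub_re, sub_im]
    ring
  · rw [show w - orthocenter a b c = (a - orthocenter a b c) - (a - w) by ring, inner_sub_left,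
      ha, h.1, sub_zero]
  · rw [show w - orthocenter a b c = (b - orthocenter a b c) - (b - w) by ring, inner_sub_left,
      hb, h.2, sub_zero]

lemma lagrangeWeight_orthocenter (hq : Complex.orientation.areaForm (b - a) (c - a) ≠ 0) :
    let q := Complex.orientation.areaForm (b - a) (c - a)
    lagrangeWeight a b c (orthocenter a b c) = (⟪a - b, c - b⟫ * ⟪a - c, b - c⟫ / q ^ 2 : ℝ) ∧
    lagrangeWeight b a c (orthocenter a b c) = (⟪b - a, c - a⟫ * ⟪a - c, b - c⟫ / q ^ 2 : ℝ) ∧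
    lagrangeWeight c a b (orthocenter a b c) = (⟪b - a, c - a⟫ * ⟪a - b, c - b⟫ / q ^ 2 : ℝ) := by
  obtain ⟨u, rfl⟩ : ∃ u, b = a + u := ⟨b - a, by ring⟩
  obtain ⟨v, rfl⟩ : ∃ v, c = a + v := ⟨c - a, by ring⟩
  simp only [orthocenter, lagrangeWeight, add_sub_cancel_left, add_sub_add_left_eq_sub,
    sub_add_cancel_left] at hq ⊢
  have hu : u ≠ 0 := by rintro rfl; simp at hq
  have hv : v ≠ 0 := by rintro rfl; simp at hq
  have huv : u ≠ v := by rintro rfl; simp at hq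
  set q := Complex.orientation.areaForm u v with hq_def
  refine ⟨?_, ?_, ?_⟩ <;> rw [div_eq_iff (by simp [hu, hv, sub_eq_zero, huv, huv.symm])] <;>
    apply Complex.ext <;>
    simp only [Complex.inner, mul_re, mul_im, conj_re, conj_im, sub_re, sub_im, neg_re, neg_im,
      ofReal_re, ofReal_im, I_re, I_im] <;>
    field_simp <;> simp only [hq_def, Complex.areaForm, mul_im, conj_re, conj_im] <;> ring

lemma lagrangeWeight_orthocenter_pos_iff
    (hq : Complex.orientation.areaForm (b - a) (c - a) ≠ 0) :
    (0 < lagrangeWeight a b c (orthocenter a b c) ∧ 0 < lagrangeWeight b a c (orthocenter a b c) ∧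
        0 < lagrangeWeight c a b (orthocenter a b c)) ↔
      0 < ⟪b - a, c - a⟫ ∧ 0 < ⟪a - b, c - b⟫ ∧ 0 < ⟪a - c, b - c⟫ := by
  obtain ⟨h₀, h₁, h₂⟩ := lagrangeWeight_orthocenter hq
  have hq2 : 0 < Complex.orientation.areaForm (b - a) (c - a) ^ 2 := by positivity
  simp only [h₀, h₁, h₂, zero_lt_real, div_pos_iff_of_pos_right hq2]
  have hba : b - a ≠ 0 := by rintro h; simp [h] at hq
  have hsum : ⟪b - a, c - a⟫ + ⟪a - b, c - b⟫ = ‖b - a‖ ^ 2 := by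
    rw [← real_inner_self_eq_norm_sq, ← neg_sub b a, inner_neg_left, ← sub_eq_add_neg,
      ← inner_sub_right, sub_sub_sub_cancel_left]
  constructor
  · rintro ⟨hbc, hac, hab⟩
    obtain ⟨ha, hb⟩ : 0 < ⟪b - a, c - a⟫ ∧ 0 < ⟪a - b, c - b⟫ :=
      (pos_and_pos_or_neg_and_neg_of_mul_pos hab).resolve_right fun h => by
        nlinarith [h.1, h.2, pow_pos (norm_pos_iff.2 hba) 2]
    exact ⟨ha, hb, pos_of_mul_pos_right hac ha.le⟩
  · rintro ⟨ha, hb, hc⟩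
    exact ⟨mul_pos hb hc, mul_pos ha hc, mul_pos ha hb⟩

end Orthocenter

/-- Three distinct non-collinear points in `ℂ` fail to be `2`-polynomially convex iff the
triangle they span is acute; in that case the unique extra hull point is the
orthocenter. -/
theorem stmt_11 (z₀ z₁ z₂ : ℂ) (h01 : z₀ ≠ z₁) (h02 : z₀ ≠ z₂) (h12 : z₁ ≠ z₂)
    (hnc : ¬ Collinear ℝ ({z₀, z₁, z₂} : Set ℂ)) :
    ((∃ w : ℂ, w ∉ ({z₀, z₁, z₂} : Set ℂ) ∧
        ∀ P : Polynomial ℂ, P.natDegree ≤ 2 →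
          ‖P.eval w‖ ≤ max ‖P.eval z₀‖ (max ‖P.eval z₁‖ ‖P.eval z₂‖)) ↔
      (angle (z₁ - z₀) (z₂ - z₀) < Real.pi / 2 ∧
       angle (z₀ - z₁) (z₂ - z₁) < Real.pi / 2 ∧
       angle (z₀ - z₂) (z₁ - z₂) < Real.pi / 2)) ∧
    ∀ w : ℂ, w ∉ ({z₀, z₁, z₂} : Set ℂ) →
      (∀ P : Polynomial ℂ, P.natDegree ≤ 2 →
          ‖P.eval w‖ ≤ max ‖P.eval z₀‖ (max ‖P.eval z₁‖ ‖P.eval z₂‖)) →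
      (inner (𝕜 := ℝ) (z₀ - w) (z₁ - z₂) = (0 : ℝ) ∧
       inner (𝕜 := ℝ) (z₁ - w) (z₂ - z₀) = (0 : ℝ)) := by
  have hq : Complex.orientation.areaForm (z₁ - z₀) (z₂ - z₀) ≠ 0 :=
    fun h => hnc (Complex.collinear_of_areaForm_eq_zero h)
  have hortho : ∀ w ∉ ({z₀, z₁, z₂} : Set ℂ), w ∈ polyHull₂ z₀ z₁ z₂ →
      ⟪z₀ - w, z₁ - z₂⟫ = 0 ∧ ⟪z₁ - w, z₂ - z₀⟫ = 0 :=
    fun w hwK hw => inner_eq_zero_of_mem_polyHull₂_diff h01 h02 h12 ⟨hw, hwK⟩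
  refine ⟨?_, hortho⟩
  simp only [angle_lt_pi_div_two_iff_inner_pos, ← lagrangeWeight_orthocenter_pos_iff hq,
    ← mem_polyHull₂_diff_iff h01 h02 h12]
  constructor
  · rintro ⟨w, hwK, hw⟩
    rw [← eq_orthocenter hq (hortho w hwK hw)]
    exact ⟨hw, hwK⟩
  · exact fun hH => ⟨_, hH.2, hH.1⟩
end

section
/- If w is the orthocenter of an acute triangle with vertices z₀, z₁, z₂ ∈ ℂ, then the three complex numbers (z_i − w)·∏_{j≠i}(z_i − z_j), i = 0,1,2, all lie on the same real half-line from the origin. -/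
/-! Each altitude condition says `z_i - w = t_i * I * (z_j - z_k)` for a real `t_i`, so the three
products all equal `t_i * v` for the one complex number `v = I (z₀ - z₁)(z₀ - z₂)(z₁ - z₂)`.
Writing the side `z_j - z_i` as a difference of two altitude vectors shows that the inner product
of the two sides at vertex `i` is `t_i` times twice the signed area of the triangle; acuteness
makes these inner products positive, so all `t_i` have the sign of the area. -/

open InnerProductGeometry Complex ComplexConjugate RealInnerProductSpace

theorem InnerProductGeometry.inner_pos_of_angle_lt_pi_div_two {V : Type*}
    [NormedAddCommGroup V] [InnerProductSpace ℝ V] {x y : V} (h : angle x y < Real.pi / 2) :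
    0 < ⟪x, y⟫ := by
  rw [angle, Real.arccos_lt_pi_div_two] at h
  exact lt_of_not_ge fun hxy => (div_nonpos_of_nonpos_of_nonneg hxy (by positivity)).not_gt h

theorem inner_sub_add_inner_sub_add_inner_sub {V : Type*}
    [NormedAddCommGroup V] [InnerProductSpace ℝ V] (a b c w : V) :
    ⟪a - w, b - c⟫ + ⟪b - w, c - a⟫ + ⟪c - w, a - b⟫ = 0 := by
  simp only [inner_sub_left, inner_sub_right, real_inner_comm]
  ring

namespace Complex

theorem exists_ofReal_mul_I_mul_of_inner_eq_zero {x a : ℂ} (ha : a ≠ 0)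
    (h : ⟪x, a⟫ = 0) : ∃ t : ℝ, x = t * I * a := by
  refine ⟨(x / a).im, ?_⟩
  have hre : (x / a).re = 0 := by
    rw [Complex.inner, mul_re, conj_re, conj_im] at h
    rw [div_re, ← add_div]
    linear_combination h / normSq a
  calc x = x / a * a := (div_mul_cancel₀ x ha).symm
    _ = _ := by rw [← re_add_im (x / a), hre]; simp

theorem inner_sub_sub_eq_mul_im {x y z w : ℂ} {s t : ℝ} (hx : x - w = s * I * (y - z))
    (hy : y - w = t * I * (z - x)) :
    ⟪y - x, z - x⟫ = s * (conj (z - x) * (y - z)).im := by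
  have hyx : y - x = t * I * (z - x) - s * I * (y - z) := by linear_combination hy - hx
  rw [hyx, Complex.inner]
  simp only [mul_re, mul_im, map_sub, map_mul, conj_ofReal, conj_I, sub_re, sub_im, conj_re,
    conj_im, ofReal_re, ofReal_im, I_re, I_im, neg_re, neg_im]
  ring

theorem im_conj_mul_sub_cyclic (x y z : ℂ) :
    (conj (x - y) * (z - x)).im = (conj (z - x) * (y - z)).im := by
  simp only [mul_im, map_sub, sub_re, sub_im, conj_re, conj_im]
  ring

theorem exists_norm_eq_one_of_mul_pos {v : ℂ} (hv : v ≠ 0) {d t₀ t₁ t₂ : ℝ}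
    (h₀ : 0 < t₀ * d) (h₁ : 0 < t₁ * d) (h₂ : 0 < t₂ * d) :
    ∃ u : ℂ, ‖u‖ = 1 ∧ ∃ r₀ r₁ r₂ : ℝ, 0 < r₀ ∧ 0 < r₁ ∧ 0 < r₂ ∧
      (t₀ : ℂ) * v = r₀ * u ∧ (t₁ : ℂ) * v = r₁ * u ∧ (t₂ : ℂ) * v = r₂ * u := by
  have hd : (d : ℂ) ≠ 0 := ofReal_ne_zero.2 (by rintro rfl; simp at h₀)
  have hv' : 0 < ‖v / d‖ := norm_pos_iff.2 (div_ne_zero hv hd)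
  have hrepr (t : ℝ) : (t : ℂ) * v = ((t * d * ‖v / d‖ : ℝ) : ℂ) * (v / d / ‖v / d‖) := by
    have : (‖v / d‖ : ℂ) ≠ 0 := ofReal_ne_zero.2 hv'.ne'
    push_cast
    field_simp
  refine ⟨v / d / ‖v / d‖, ?_, _, _, _, mul_pos h₀ hv', mul_pos h₁ hv', mul_pos h₂ hv',
    hrepr t₀, hrepr t₁, hrepr t₂⟩
  rw [norm_div, norm_real, Real.norm_of_nonneg (norm_nonneg _), div_self hv'.ne']

end Complex

theorem stmt_12_general (z₀ z₁ z₂ w : ℂ) (h01 : z₀ ≠ z₁) (h02 : z₀ ≠ z₂) (h12 : z₁ ≠ z₂)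
    (hacute : angle (z₁ - z₀) (z₂ - z₀) < Real.pi / 2 ∧
              angle (z₀ - z₁) (z₂ - z₁) < Real.pi / 2 ∧
              angle (z₀ - z₂) (z₁ - z₂) < Real.pi / 2)
    (horth₁ : inner (𝕜 := ℝ) (z₀ - w) (z₁ - z₂) = (0 : ℝ))
    (horth₂ : inner (𝕜 := ℝ) (z₁ - w) (z₂ - z₀) = (0 : ℝ)) :
    ∃ u : ℂ, ‖u‖ = 1 ∧ ∃ r₀ r₁ r₂ : ℝ, 0 < r₀ ∧ 0 < r₁ ∧ 0 < r₂ ∧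
      (z₀ - w) * ((z₀ - z₁) * (z₀ - z₂)) = (r₀ : ℂ) * u ∧
      (z₁ - w) * ((z₁ - z₀) * (z₁ - z₂)) = (r₁ : ℂ) * u ∧
      (z₂ - w) * ((z₂ - z₀) * (z₂ - z₁)) = (r₂ : ℂ) * u := by
  obtain ⟨hA₀, hA₁, hA₂⟩ := hacute
  have horth₃ : ⟪z₂ - w, z₀ - z₁⟫ = 0 := by
    linear_combination inner_sub_add_inner_sub_add_inner_sub z₀ z₁ z₂ w - horth₁ - horth₂
  obtain ⟨t₀, hw₀⟩ := exists_ofReal_mul_I_mul_of_inner_eq_zero (sub_ne_zero.2 h12) horth₁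
  obtain ⟨t₁, hw₁⟩ :=
    exists_ofReal_mul_I_mul_of_inner_eq_zero (sub_ne_zero.2 h02.symm) horth₂
  obtain ⟨t₂, hw₂⟩ := exists_ofReal_mul_I_mul_of_inner_eq_zero (sub_ne_zero.2 h01) horth₃
  have hpos₀ := inner_pos_of_angle_lt_pi_div_two hA₀
  rw [inner_sub_sub_eq_mul_im hw₀ hw₁] at hpos₀
  have hpos₁ := inner_pos_of_angle_lt_pi_div_two hA₁
  rw [real_inner_comm, inner_sub_sub_eq_mul_im hw₁ hw₂, im_conj_mul_sub_cyclic] at hpos₁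
  have hpos₂ := inner_pos_of_angle_lt_pi_div_two hA₂
  rw [inner_sub_sub_eq_mul_im hw₂ hw₀, ← im_conj_mul_sub_cyclic] at hpos₂
  have hv : I * ((z₀ - z₁) * (z₀ - z₂) * (z₁ - z₂)) ≠ 0 := by
    simp [sub_eq_zero, h01, h02, h12]
  obtain ⟨u, hu, r₀, r₁, r₂, hr₀, hr₁, hr₂, hp₀, hp₁, hp₂⟩ :=
    exists_norm_eq_one_of_mul_pos hv hpos₀ hpos₁ hpos₂
  refine ⟨u, hu, r₀, r₁, r₂, hr₀, hr₁, hr₂, ?_, ?_, ?_⟩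
  · rw [hw₀, ← hp₀]; ring
  · rw [hw₁, ← hp₁]; ring
  · rw [hw₂, ← hp₂]; ring

/-- If `w` is the orthocenter of an acute triangle `z₀ z₁ z₂` in `ℂ`, then the values
`(z_i − w) ∏_{j ≠ i}(z_i − z_j)` all lie on the same real half-line from the origin. -/
theorem stmt_12 (z₀ z₁ z₂ w : ℂ) (h01 : z₀ ≠ z₁) (h02 : z₀ ≠ z₂) (h12 : z₁ ≠ z₂)
    (hnc : ¬ Collinear ℝ ({z₀, z₁, z₂} : Set ℂ))
    (hacute : angle (z₁ - z₀) (z₂ - z₀) < Real.pi / 2 ∧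
              angle (z₀ - z₁) (z₂ - z₁) < Real.pi / 2 ∧
              angle (z₀ - z₂) (z₁ - z₂) < Real.pi / 2)
    (horth₁ : inner (𝕜 := ℝ) (z₀ - w) (z₁ - z₂) = (0 : ℝ))
    (horth₂ : inner (𝕜 := ℝ) (z₁ - w) (z₂ - z₀) = (0 : ℝ)) :
    ∃ u : ℂ, ‖u‖ = 1 ∧ ∃ r₀ r₁ r₂ : ℝ, 0 < r₀ ∧ 0 < r₁ ∧ 0 < r₂ ∧
      (z₀ - w) * ((z₀ - z₁) * (z₀ - z₂)) = (r₀ : ℂ) * u ∧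
      (z₁ - w) * ((z₁ - z₀) * (z₁ - z₂)) = (r₁ : ℂ) * u ∧
      (z₂ - w) * ((z₂ - z₀) * (z₂ - z₁)) = (r₂ : ℂ) * u :=
  stmt_12_general z₀ z₁ z₂ w h01 h02 h12 hacute horth₁ horth₂
end

section
/- Let A ⊆ {z ∈ ℂ : |z| = 1} be a compact set containing the n+1 equally spaced points {e^{2πik/(n+1)} : k = 0,…,n}. Then the Chebyshev property holds: for every monic polynomial p of degree n, sup_{z ∈ A} |p(z)| ≥ 1 = sup_{z ∈ A} |z^n|, so z^n minimizes the sup norm on A among monic polynomials of degree n. -/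
/-!
Pair `p` against `z` over the `(n+1)`-st roots of unity `ζ^k`: by orthogonality of the characters
`k ↦ ζ^(jk)`, the sum `∑ₖ ζ^k p(ζ^k)` picks out exactly `(n+1)` times the leading coefficient of
`p`, which is `1`. Since `|ζ^k| = 1`, the triangle inequality gives `∑ₖ |p(ζ^k)| ≥ n + 1`, so some
root of unity, which lies in `A`, has `|p(ζ^k)| ≥ 1`.
-/

open Finset Polynomial

namespace IsPrimitiveRoot

variable {R : Type*} [CommRing R] [IsDomain R] {ζ : R} {N : ℕ}

theorem geom_sum_pow_eq_zero (hζ : IsPrimitiveRoot ζ N) {j : ℕ} (hj : ¬N ∣ j) :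
    ∑ k ∈ range N, (ζ ^ j) ^ k = 0 := by
  have hne : ζ ^ j - 1 ≠ 0 := sub_ne_zero.mpr fun h => hj (hζ.pow_eq_one_iff_dvd j |>.mp h)
  refine (mul_eq_zero.mp ?_).resolve_right hne
  rw [geom_sum_mul, pow_right_comm, hζ.pow_eq_one, one_pow, sub_self]

theorem sum_pow_mul_eval_pow (hζ : IsPrimitiveRoot ζ N) {p : R[X]} (hp : p.natDegree < N) :
    ∑ k ∈ range N, ζ ^ k * p.eval (ζ ^ k) = N * p.coeff (N - 1) := by
  have hN : 0 < N := p.natDegree.zero_le.trans_lt hp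
  calc ∑ k ∈ range N, ζ ^ k * p.eval (ζ ^ k)
      = ∑ j ∈ range N, p.coeff j * ∑ k ∈ range N, (ζ ^ (j + 1)) ^ k := by
        simp only [eval_eq_sum_range' hp, mul_sum]
        rw [sum_comm]
        refine sum_congr rfl fun j _ => sum_congr rfl fun k _ => ?_
        ring
    _ = N * p.coeff (N - 1) := by
        rw [sum_eq_single (N - 1)]
        · rw [Nat.sub_add_cancel hN, hζ.pow_eq_one]
          simp [mul_comm]
        · intro j hj hjN
          have hndvd : ¬N ∣ j + 1 := fun h =>
            hjN (by have := Nat.le_of_dvd j.succ_pos h; have := mem_range.mp hj; omega)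
          rw [hζ.geom_sum_pow_eq_zero hndvd, mul_zero]
        · exact fun h => absurd (mem_range.mpr (Nat.sub_lt hN one_pos)) h

theorem exists_norm_coeff_le_norm_eval_pow {ζ : ℂ} (hζ : IsPrimitiveRoot ζ N) {p : ℂ[X]}
    (hp : p.natDegree < N) : ∃ k ∈ range N, ‖p.coeff (N - 1)‖ ≤ ‖p.eval (ζ ^ k)‖ := by
  have hN : 0 < N := p.natDegree.zero_le.trans_lt hp
  refine exists_le_of_sum_le (nonempty_range_iff.mpr hN.ne') ?_
  calc ∑ _k ∈ range N, ‖p.coeff (N - 1)‖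
      = ‖∑ k ∈ range N, ζ ^ k * p.eval (ζ ^ k)‖ := by
        rw [hζ.sum_pow_mul_eval_pow hp, norm_mul, Complex.norm_natCast, sum_const, card_range,
          nsmul_eq_mul]
    _ ≤ ∑ k ∈ range N, ‖ζ ^ k * p.eval (ζ ^ k)‖ := norm_sum_le _ _
    _ = ∑ k ∈ range N, ‖p.eval (ζ ^ k)‖ := by
        simp only [norm_mul, norm_pow, hζ.norm'_eq_one hN.ne', one_pow, one_mul]

end IsPrimitiveRoot

theorem stmt_16_general (n : ℕ) (A : Set ℂ) (hroots : {z : ℂ | z ^ (n + 1) = 1} ⊆ A)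
    (p : Polynomial ℂ) (hmonic : p.Monic) (hdeg : p.natDegree = n) :
    ∃ z ∈ A, 1 ≤ ‖p.eval z‖ := by
  obtain ⟨ζ, hζ⟩ : ∃ ζ : ℂ, IsPrimitiveRoot ζ (n + 1) :=
    ⟨_, Complex.isPrimitiveRoot_exp (n + 1) n.succ_ne_zero⟩
  have hlead : p.coeff n = 1 := hdeg ▸ hmonic.coeff_natDegree
  obtain ⟨k, -, hk⟩ := hζ.exists_norm_coeff_le_norm_eval_pow (p := p) (by omega)
  rw [Nat.add_sub_cancel, hlead, norm_one] at hk
  refine ⟨ζ ^ k, hroots ?_, hk⟩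
  show (ζ ^ k) ^ (n + 1) = 1
  rw [pow_right_comm, hζ.pow_eq_one, one_pow]

/-- If `A` is a compact subset of the unit circle containing the `(n+1)`-st roots of
unity, then every monic polynomial of degree `n` has sup norm at least `1` on `A`;
thus `z^n` (whose modulus is identically `1` on `A`) is a Chebyshev polynomial of `A`. -/
theorem stmt_16 (n : ℕ) (A : Set ℂ) (hA : IsCompact A)
    (hcirc : A ⊆ {z : ℂ | ‖z‖ = 1}) (hroots : {z : ℂ | z ^ (n + 1) = 1} ⊆ A)
    (p : Polynomial ℂ) (hmonic : p.Monic) (hdeg : p.natDegree = n) :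
    ∃ z ∈ A, 1 ≤ ‖p.eval z‖ :=
  stmt_16_general n A hroots p hmonic hdeg
end

section
/- Let α < π/4 and A = {z ∈ ℂ : |z| = 1, −α ≤ arg z ≤ α}. Then for every φ with |φ| ≤ α and every r ∈ [0,1), there exist a > 0 such that the quadratic polynomial p(z) = z² − 2e^{iφ}z + e^{2iφ}(a² + 1) satisfies max_{z ∈ A} |p(z)| < |p(r e^{iφ})|. Consequently no point of the open angular sector {z : |z| < 1, −α ≤ arg z ≤ α} lies in the 2-polynomial hull of A. -/
/-!
Dividing by `e = e^{iφ}` turns `p(w)` into `e²((w/e - 1)² + a²)`, so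
`|p(r e)| = (1 - r)² + a²`, while an arc point `z` gives `u = z/e` on the unit circle with
`Re u ≥ 0` (as `|arg z - φ| ≤ 2α < π/2`). For such `u`, `-(u - 1)²` has nonnegative real part
and modulus at most `4`, so `|(u - 1)² + a²|² ≤ a⁴ + 16`, which is beaten by
`((1 - r)² + a²)² > a⁴ + 2a²(1 - r)²` once `a²(1 - r)² > 8`.
-/

open Complex

lemma Complex.norm_ofReal_sub_sq_le {b : ℝ} (hb : 0 ≤ b) {v : ℂ} (hv : 0 ≤ v.re) :
    ‖(b : ℂ) - v‖ ^ 2 ≤ b ^ 2 + ‖v‖ ^ 2 := by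
  rw [Complex.sq_norm, Complex.sq_norm, normSq_sub, normSq_ofReal, re_ofReal_mul, conj_re]
  nlinarith [mul_nonneg hv hb]

lemma Complex.re_sub_one_sq_nonpos {u : ℂ} (hu : ‖u‖ = 1) (hre : 0 ≤ u.re) :
    ((u - 1) ^ 2).re ≤ 0 := by
  have hunit : u.re ^ 2 + u.im ^ 2 = 1 := by
    have h := Complex.sq_norm u
    rw [hu, normSq_apply] at h
    linarith
  have hre_le : u.re ≤ 1 := by nlinarith [sq_nonneg u.im]
  have : ((u - 1) ^ 2).re = 2 * u.re * (u.re - 1) := by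
    simp only [sq, mul_re, sub_re, sub_im, one_re, one_im]; nlinarith
  rw [this]
  nlinarith

lemma Complex.norm_sub_one_sq_add_lt {u : ℂ} (hu : ‖u‖ = 1) (hre : 0 ≤ u.re) {r b : ℝ}
    (hb : 8 < b * (1 - r) ^ 2) :
    ‖(u - 1) ^ 2 + (b : ℂ)‖ < (1 - r) ^ 2 + b := by
  have hb0 : 0 ≤ b := by nlinarith [sq_nonneg (1 - r)]
  have hsub : ‖u - 1‖ ≤ 2 := by
    calc ‖u - 1‖ ≤ ‖u‖ + ‖(1 : ℂ)‖ := norm_sub_le _ _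
      _ = 2 := by rw [hu, norm_one]; norm_num
  have hsq : ‖(u - 1) ^ 2 + (b : ℂ)‖ ^ 2 ≤ b ^ 2 + 16 := by
    have hv : 0 ≤ (-(u - 1) ^ 2).re := by
      rw [neg_re]; linarith [re_sub_one_sq_nonpos hu hre]
    calc ‖(u - 1) ^ 2 + (b : ℂ)‖ ^ 2 = ‖(b : ℂ) - -(u - 1) ^ 2‖ ^ 2 := by ring_nf
      _ ≤ b ^ 2 + ‖-(u - 1) ^ 2‖ ^ 2 := norm_ofReal_sub_sq_le hb0 hv
      _ = b ^ 2 + (‖u - 1‖ ^ 2) ^ 2 := by rw [norm_neg, norm_pow]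
      _ ≤ b ^ 2 + (2 ^ 2) ^ 2 := by gcongr
      _ = b ^ 2 + 16 := by norm_num
  apply lt_of_pow_lt_pow_left₀ 2 (by positivity)
  nlinarith [pow_nonneg (sq_nonneg (1 - r)) 2]

lemma Complex.norm_quadratic_eq_of_norm_eq_one {e : ℂ} (he : ‖e‖ = 1) (b w : ℂ) :
    ‖w ^ 2 - 2 * e * w + e ^ 2 * (b + 1)‖ = ‖(w / e - 1) ^ 2 + b‖ := by
  have he0 : e ≠ 0 := by rintro rfl; simp at he
  have : w ^ 2 - 2 * e * w + e ^ 2 * (b + 1) = e ^ 2 * ((w / e - 1) ^ 2 + b) := by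
    field_simp; ring
  rw [this, norm_mul, norm_pow, he, one_pow, one_mul]

lemma Complex.re_div_exp_nonneg_of_abs_arg_le {α φ : ℝ} (hα : α < Real.pi / 4)
    (hφ : |φ| ≤ α) {z : ℂ} (hz : ‖z‖ = 1) (hlo : -α ≤ z.arg) (hhi : z.arg ≤ α) :
    0 ≤ (z / exp (φ * I)).re := by
  have hz_eq : z = exp (z.arg * I) := by
    simpa [hz] using (norm_mul_exp_arg_mul_I z).symm
  have hdiv : z / exp (φ * I) = exp (↑(z.arg - φ) * I) := by
    conv_lhs => rw [hz_eq]
    rw [← exp_sub]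
    push_cast
    ring_nf
  rw [hdiv, exp_ofReal_mul_I_re]
  obtain ⟨hφlo, hφhi⟩ := abs_le.mp hφ
  apply Real.cos_nonneg_of_neg_pi_div_two_le_of_le <;> linarith

theorem stmt_17_general (α : ℝ) (hα : α < Real.pi / 4) (φ : ℝ) (hφ : |φ| ≤ α)
    (r : ℝ) (hr1 : r < 1) :
    ∃ a : ℝ, 0 < a ∧
      ∀ z : ℂ, ‖z‖ = 1 → -α ≤ z.arg → z.arg ≤ α →
        ‖z ^ 2 - 2 * Complex.exp (φ * Complex.I) * z
            + Complex.exp (2 * φ * Complex.I) * ((a : ℂ) ^ 2 + 1)‖ <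
        ‖((r : ℂ) * Complex.exp (φ * Complex.I)) ^ 2
            - 2 * Complex.exp (φ * Complex.I) * ((r : ℂ) * Complex.exp (φ * Complex.I))
            + Complex.exp (2 * φ * Complex.I) * ((a : ℂ) ^ 2 + 1)‖ := by
  have hr : 0 < 1 - r := sub_pos.mpr hr1
  refine ⟨3 / (1 - r), by positivity, fun z hz hlo hhi => ?_⟩
  set a := 3 / (1 - r)
  have ha : 8 < a ^ 2 * (1 - r) ^ 2 := by
    rw [div_pow, div_mul_cancel₀ _ (by positivity)]; norm_num
  have he : ‖exp (φ * I)‖ = 1 := norm_exp_ofReal_mul_I φ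
  have hexp_two : exp (2 * φ * I) = exp (φ * I) ^ 2 := by
    rw [← exp_nat_mul]; push_cast; ring_nf
  have hpoint :
      ‖((r : ℂ) * exp (φ * I) / exp (φ * I) - 1) ^ 2 + (a : ℂ) ^ 2‖ = (1 - r) ^ 2 + a ^ 2 := by
    have hreal : ((r : ℂ) - 1) ^ 2 + (a : ℂ) ^ 2 = (((1 - r) ^ 2 + a ^ 2 : ℝ) : ℂ) := by
      push_cast; ring
    rw [mul_div_cancel_right₀ _ (exp_ne_zero _), hreal, norm_real,
      Real.norm_of_nonneg (by positivity)]
  rw [hexp_two, norm_quadratic_eq_of_norm_eq_one he, norm_quadratic_eq_of_norm_eq_one he, hpoint,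
    show (a : ℂ) ^ 2 = ((a ^ 2 : ℝ) : ℂ) by push_cast; rfl]
  exact norm_sub_one_sq_add_lt (by rw [norm_div, hz, he, div_one])
    (re_div_exp_nonneg_of_abs_arg_le hα hφ hz hlo hhi) ha

/-- For an arc `A` of the unit circle of half-angle `α < π/4` centered at `1`, every
point `r e^{iφ}` with `0 ≤ r < 1` and `|φ| ≤ α` can be separated from `A` by the
explicit quadratic `p(z) = z² − 2e^{iφ}z + e^{2iφ}(a² + 1)` for `a > 0` large enough. -/
theorem stmt_17 (α : ℝ) (hα : α < Real.pi / 4) (φ : ℝ) (hφ : |φ| ≤ α)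
    (r : ℝ) (hr0 : 0 ≤ r) (hr1 : r < 1) :
    ∃ a : ℝ, 0 < a ∧
      ∀ z : ℂ, ‖z‖ = 1 → -α ≤ z.arg → z.arg ≤ α →
        ‖z ^ 2 - 2 * Complex.exp (φ * Complex.I) * z
            + Complex.exp (2 * φ * Complex.I) * ((a : ℂ) ^ 2 + 1)‖ <
        ‖((r : ℂ) * Complex.exp (φ * Complex.I)) ^ 2
            - 2 * Complex.exp (φ * Complex.I) * ((r : ℂ) * Complex.exp (φ * Complex.I))
            + Complex.exp (2 * φ * Complex.I) * ((a : ℂ) ^ 2 + 1)‖ :=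
  stmt_17_general α hα φ hφ r hr1
end
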